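/- arXiv:1708.05319 — 2 statements merged into one kernel-verified Lean document; each statement's English description precedes it below -/
import Mathlib

section
/- Under the assumptions that Y is independent of S_1 with E[Y] = m_Y, Var[Y] = σ_Y² > 0, and Var[θᵀS_1] = V > 0, the equation (E[X(θ,0)] − C_0)/√V = (E[X(θ,q)] − C_0)/√(V + q²σ_Y²) in the unknown P (where X(θ,q) = qY + θᵀ(S_1 − S_0(1+r+λ)) + (C_0+P)(1+r+λ) and X(θ,0) uses P = P₀ fixed with E[X(θ,0)] > C_0) has the unique solution P(q)(1+r+λ) = −q m_Y + P₀(1+r+λ) + (E[X(θ,0)] − C_0)(√(1 + q²σ_Y²/V) − 1). -/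
/-!
Both expected payoffs are affine in the quote by linearity of expectation:
`E[X(θ,q)] − C₀ = q m_Y + (E[X(θ,0)] − C₀) + (P − P₀)(1+r+λ)`.
Factoring `√(V + q²σ_Y²) = √V · √(1 + q²σ_Y²/V)` turns the indifference equation into
`E[X(θ,q)] − C₀ = (E[X(θ,0)] − C₀) √(1 + q²σ_Y²/V)`, which is linear in `P`.
-/

open MeasureTheory Matrix

theorem integral_const_mul_add_add {Ω : Type*} [MeasurableSpace Ω] {μ : Measure Ω}
    [IsProbabilityMeasure μ] {Y Z : Ω → ℝ} (hY : Integrable Y μ) (hZ : Integrable Z μ)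
    (a c : ℝ) : ∫ ω, a * Y ω + Z ω + c ∂μ = a * ∫ ω, Y ω ∂μ + ∫ ω, Z ω ∂μ + c := by
  have hYZ : Integrable (fun ω => a * Y ω + Z ω) μ := (hY.const_mul a).add hZ
  rw [integral_add hYZ (integrable_const c), integral_add (hY.const_mul a) hZ,
    integral_const_mul, integral_const, probReal_univ, one_smul]

theorem Real.sqrt_add_eq_sqrt_mul_sqrt_one_add_div {V t : ℝ} (hV : 0 < V) :
    √(V + t) = √V * √(1 + t / V) := by
  rw [← Real.sqrt_mul hV.le, mul_add, mul_one, mul_div_cancel₀ t hV.ne']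

theorem div_sqrt_eq_div_sqrt_add_iff {A B V t : ℝ} (hV : 0 < V) (ht : 0 ≤ t) :
    A / √V = B / √(V + t) ↔ B = A * √(1 + t / V) := by
  have hsV : 0 < √V := Real.sqrt_pos.mpr hV
  have hsVt : 0 < √(V + t) := Real.sqrt_pos.mpr (by linarith)
  rw [div_eq_div_iff hsV.ne' hsVt.ne', Real.sqrt_add_eq_sqrt_mul_sqrt_one_add_div hV,
    mul_left_comm, mul_comm B, mul_right_inj' hsV.ne', eq_comm]

theorem raroc_indifference_price_general
    {Ω : Type*} [MeasurableSpace Ω] (μ : Measure Ω) [IsProbabilityMeasure μ]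
    {d : ℕ} (S1 : Ω → Fin d → ℝ) (Y : Ω → ℝ) (S0 θ : Fin d → ℝ)
    (q r lam C0 P₀ mY V σY : ℝ)
    (hV : 0 < V)
    (hYint : Integrable Y μ) (hmY : ∫ ω, Y ω ∂μ = mY)
    (hZint : Integrable (fun ω => θ ⬝ᵥ (S1 ω - (1 + r + lam) • S0)) μ)
    (X : ℝ → ℝ → Ω → ℝ)
    (hX : ∀ P q ω, X P q ω =
      q * Y ω + θ ⬝ᵥ (S1 ω - (1 + r + lam) • S0) + (C0 + P) * (1 + r + lam)) :
    ∀ P : ℝ,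
      ((∫ ω, X P₀ 0 ω ∂μ) - C0) / Real.sqrt V =
          ((∫ ω, X P q ω ∂μ) - C0) / Real.sqrt (V + q ^ 2 * σY ^ 2) ↔
      P * (1 + r + lam) =
        -(q * mY) + P₀ * (1 + r + lam) +
          ((∫ ω, X P₀ 0 ω ∂μ) - C0) *
            (Real.sqrt (1 + q ^ 2 * σY ^ 2 / V) - 1) := by
  intro P
  have hE : ∀ P' q', ∫ ω, X P' q' ω ∂μ =
      q' * mY + ∫ ω, θ ⬝ᵥ (S1 ω - (1 + r + lam) • S0) ∂μ + (C0 + P') * (1 + r + lam) := by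
    intro P' q'
    simp only [hX]
    rw [integral_const_mul_add_add hYint hZint, hmY]
  rw [div_sqrt_eq_div_sqrt_add_iff hV (by positivity), hE P q, hE P₀ 0]
  constructor <;> intro h <;> linarith

/-- Exact RAROC-indifference price of Section 2: the indifference equation
`(E[X(θ,0)] − C_0)/√V = (E[X(θ,q)] − C_0)/√(V + q²σ_Y²)` in the unknown quote `P`
has the unique solution
`P(1+r+λ) = −q m_Y + P₀(1+r+λ) + (E[X(θ,0)] − C_0)(√(1 + q²σ_Y²/V) − 1)`. -/
theorem raroc_indifference_price
    {Ω : Type*} [MeasurableSpace Ω] (μ : Measure Ω) [IsProbabilityMeasure μ]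
    {d : ℕ} (S1 : Ω → Fin d → ℝ) (Y : Ω → ℝ) (S0 θ : Fin d → ℝ)
    (q r lam C0 P₀ mY V σY : ℝ)
    (hV : 0 < V) (hσY : 0 < σY) (h1 : 0 < 1 + r + lam)
    (hYint : Integrable Y μ) (hmY : ∫ ω, Y ω ∂μ = mY)
    (hZint : Integrable (fun ω => θ ⬝ᵥ (S1 ω - (1 + r + lam) • S0)) μ)
    (X : ℝ → ℝ → Ω → ℝ)
    (hX : ∀ P q ω, X P q ω =
      q * Y ω + θ ⬝ᵥ (S1 ω - (1 + r + lam) • S0) + (C0 + P) * (1 + r + lam))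
    (hE0 : C0 < ∫ ω, X P₀ 0 ω ∂μ) :
    ∀ P : ℝ,
      ((∫ ω, X P₀ 0 ω ∂μ) - C0) / Real.sqrt V =
          ((∫ ω, X P q ω ∂μ) - C0) / Real.sqrt (V + q ^ 2 * σY ^ 2) ↔
      P * (1 + r + lam) =
        -(q * mY) + P₀ * (1 + r + lam) +
          ((∫ ω, X P₀ 0 ω ∂μ) - C0) *
            (Real.sqrt (1 + q ^ 2 * σY ^ 2 / V) - 1) :=
  raroc_indifference_price_general μ S1 Y S0 θ q r lam C0 P₀ mY V σY hV hYint hmY hZint X hX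
end

section
/- Under the hypotheses of the envelope theorem with f, g ∈ C² and θ*, χ ∈ C¹, the second derivative of the value function v(q) = f(θ*(q),q) satisfies v''(q) = ∂²f/∂q² − 2χ'(q)∂g/∂q − χ(q)∂²g/∂q² + Σ_{i,j} (χ(q)∂²g/∂θ_i∂θ_j − ∂²f/∂θ_i∂θ_j)(dθ*_j/dq)(dθ*_i/dq), all partials evaluated at (θ*(q),q). -/
/-!
Write `γ(q) = (θ*(q), q)`. Differentiating the constraint along `γ` gives
`∂_θ g · θ*' = -∂_q g`, so the first-order conditions reduce `v' = Df(γ)(θ*', 1)` to the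
envelope formula `v' = ∂_q f - χ ∂_q g`. Differentiating once more leaves the mixed terms
`∂²_{θq}(f - χ g)(θ*', ·)`; differentiating the first-order conditions along `γ` and testing them
against `θ*'` trades these (by symmetry of second derivatives and the constraint once more) for
`-χ' ∂_q g + (χ ∂²_θθ g - ∂²_θθ f)(θ*', θ*')`.
-/

open ContinuousLinearMap

section PartialDerivatives

variable {E V : Type*} [NormedAddCommGroup E] [NormedSpace ℝ E]
  [NormedAddCommGroup V] [NormedSpace ℝ V]

theorem ContDiff.differentiable_fderiv {F : E → V} {n : WithTop ℕ∞} (hF : ContDiff ℝ n F)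
    (hn : 2 ≤ n) : Differentiable ℝ (fderiv ℝ F) :=
  (hF.fderiv_right (m := 1) hn).differentiable one_ne_zero

variable {F : E × ℝ → V}

theorem hasDerivAt_comp_graph {γ : ℝ → E} {γ' : E} {q : ℝ}
    (hF : DifferentiableAt ℝ F (γ q, q)) (hγ : HasDerivAt γ γ' q) :
    HasDerivAt (fun t => F (γ t, t)) (fderiv ℝ F (γ q, q) (γ', 1)) q :=
  hF.hasFDerivAt.comp_hasDerivAt (f := fun t => (γ t, t)) q (hγ.prodMk (hasDerivAt_id q))

theorem hasDerivAt_fderiv_comp_graph_apply {γ : ℝ → E} {γ' : E} {q : ℝ}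
    (hF : DifferentiableAt ℝ (fderiv ℝ F) (γ q, q)) (hγ : HasDerivAt γ γ' q) (x : E × ℝ) :
    HasDerivAt (fun t => fderiv ℝ F (γ t, t) x) (fderiv ℝ (fderiv ℝ F) (γ q, q) (γ', 1) x) q := by
  simpa using (hasDerivAt_comp_graph hF hγ).clm_apply (hasDerivAt_const q x)

theorem fderiv_comp_prodMk_left {θ : E} {q : ℝ} (hF : DifferentiableAt ℝ F (θ, q)) :
    fderiv ℝ (fun θ' => F (θ', q)) θ = (fderiv ℝ F (θ, q)).comp (inl ℝ E ℝ) :=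
  (hF.hasFDerivAt.comp θ (hasFDerivAt_prodMk_left θ q)).fderiv

theorem hasDerivAt_comp_prodMk_right {θ : E} {q : ℝ} (hF : DifferentiableAt ℝ F (θ, q)) :
    HasDerivAt (fun t => F (θ, t)) (fderiv ℝ F (θ, q) (0, 1)) q :=
  hasDerivAt_comp_graph hF (hasDerivAt_const q θ)

theorem deriv_deriv_comp_prodMk_right {θ : E} {q : ℝ} (hF : Differentiable ℝ F)
    (hF' : DifferentiableAt ℝ (fderiv ℝ F) (θ, q)) :
    deriv (deriv fun t => F (θ, t)) q = fderiv ℝ (fderiv ℝ F) (θ, q) (0, 1) (0, 1) := by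
  have hderiv : deriv (fun t => F (θ, t)) = fun t => fderiv ℝ F (θ, t) (0, 1) :=
    funext fun t => (hasDerivAt_comp_prodMk_right (hF _)).deriv
  rw [hderiv]
  exact (hasDerivAt_fderiv_comp_graph_apply hF' (hasDerivAt_const q θ) _).deriv

theorem hasFDerivAt_fderiv_comp_prodMk_left {θ : E} {q : ℝ} (hF : Differentiable ℝ F)
    (hF' : DifferentiableAt ℝ (fderiv ℝ F) (θ, q)) :
    HasFDerivAt (fun θ' => fderiv ℝ (fun θ'' => F (θ'', q)) θ')
      (((compL ℝ E (E × ℝ) V).flip (inl ℝ E ℝ)).comp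
        ((fderiv ℝ (fderiv ℝ F) (θ, q)).comp (inl ℝ E ℝ))) θ := by
  have hpartial : (fun θ' => fderiv ℝ (fun θ'' => F (θ'', q)) θ') =
      fun θ' => (compL ℝ E (E × ℝ) V).flip (inl ℝ E ℝ) (fderiv ℝ F (θ', q)) :=
    funext fun θ' => fderiv_comp_prodMk_left (hF _)
  rw [hpartial]
  exact (((compL ℝ E (E × ℝ) V).flip (inl ℝ E ℝ)).hasFDerivAt).comp θ
    (hF'.hasFDerivAt.comp θ (hasFDerivAt_prodMk_left θ q))

end PartialDerivatives

section Envelope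

variable {E : Type*} [NormedAddCommGroup E] [NormedSpace ℝ E]
  {F G : E × ℝ → ℝ} {θ : ℝ → E} {χ : ℝ → ℝ} {c q : ℝ}

theorem fderiv_apply_tangent_eq_zero_of_comp_graph_const (hG : DifferentiableAt ℝ G (θ q, q))
    (hθ : DifferentiableAt ℝ θ q) (hc : ∀ t, G (θ t, t) = c) :
    fderiv ℝ G (θ q, q) (deriv θ q, 1) = 0 := by
  have hconst : HasDerivAt (fun t => G (θ t, t)) 0 q := by
    simpa only [hc] using hasDerivAt_const q c
  exact (hasDerivAt_comp_graph hG hθ.hasDerivAt).unique hconst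

theorem hasDerivAt_envelope (hF : DifferentiableAt ℝ F (θ q, q))
    (hG : DifferentiableAt ℝ G (θ q, q)) (hθ : DifferentiableAt ℝ θ q)
    (hc : ∀ t, G (θ t, t) = c)
    (hFOC : ∀ u, fderiv ℝ F (θ q, q) (u, 0) = χ q * fderiv ℝ G (θ q, q) (u, 0)) :
    HasDerivAt (fun t => F (θ t, t))
      (fderiv ℝ F (θ q, q) (0, 1) - χ q * fderiv ℝ G (θ q, q) (0, 1)) q := by
  have hsplit : ((deriv θ q, 1) : E × ℝ) = (deriv θ q, 0) + (0, 1) := by simp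
  have hG0 := fderiv_apply_tangent_eq_zero_of_comp_graph_const hG hθ hc
  rw [hsplit, map_add] at hG0
  refine (hasDerivAt_comp_graph hF hθ.hasDerivAt).congr_deriv ?_
  rw [hsplit, map_add, hFOC]
  linear_combination χ q * hG0

theorem fderiv_fderiv_tangent_apply_inl_of_lagrange
    (hF : DifferentiableAt ℝ (fderiv ℝ F) (θ q, q))
    (hG : DifferentiableAt ℝ (fderiv ℝ G) (θ q, q)) (hθ : DifferentiableAt ℝ θ q)
    (hχ : DifferentiableAt ℝ χ q)
    (hFOC : ∀ t u, fderiv ℝ F (θ t, t) (u, 0) = χ t * fderiv ℝ G (θ t, t) (u, 0)) (u : E) :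
    fderiv ℝ (fderiv ℝ F) (θ q, q) (deriv θ q, 1) (u, 0) =
      deriv χ q * fderiv ℝ G (θ q, q) (u, 0)
        + χ q * fderiv ℝ (fderiv ℝ G) (θ q, q) (deriv θ q, 1) (u, 0) := by
  have hFu := hasDerivAt_fderiv_comp_graph_apply hF hθ.hasDerivAt (u, 0)
  simp only [hFOC] at hFu
  exact hFu.unique
    (hχ.hasDerivAt.mul (hasDerivAt_fderiv_comp_graph_apply hG hθ.hasDerivAt (u, 0)))

theorem deriv_deriv_comp_graph_of_lagrange (hF : Differentiable ℝ F) (hG : Differentiable ℝ G)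
    (hF' : DifferentiableAt ℝ (fderiv ℝ F) (θ q, q))
    (hG' : DifferentiableAt ℝ (fderiv ℝ G) (θ q, q)) (hθ : Differentiable ℝ θ)
    (hχ : DifferentiableAt ℝ χ q) (hc : ∀ t, G (θ t, t) = c)
    (hFOC : ∀ t u, fderiv ℝ F (θ t, t) (u, 0) = χ t * fderiv ℝ G (θ t, t) (u, 0)) :
    deriv (deriv fun t => F (θ t, t)) q =
      fderiv ℝ (fderiv ℝ F) (θ q, q) (deriv θ q, 1) (0, 1)
        - (deriv χ q * fderiv ℝ G (θ q, q) (0, 1)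
          + χ q * fderiv ℝ (fderiv ℝ G) (θ q, q) (deriv θ q, 1) (0, 1)) := by
  have hderiv : deriv (fun t => F (θ t, t)) =
      fun t => fderiv ℝ F (θ t, t) (0, 1) - χ t * fderiv ℝ G (θ t, t) (0, 1) :=
    funext fun t => (hasDerivAt_envelope (hF _) (hG _) (hθ t) hc (hFOC t)).deriv
  rw [hderiv]
  exact ((hasDerivAt_fderiv_comp_graph_apply hF' (hθ q).hasDerivAt _).sub
    (hχ.hasDerivAt.mul (hasDerivAt_fderiv_comp_graph_apply hG' (hθ q).hasDerivAt _))).deriv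

theorem deriv_deriv_envelope (hF : ContDiff ℝ 2 F) (hG : ContDiff ℝ 2 G)
    (hθ : Differentiable ℝ θ) (hχ : Differentiable ℝ χ) (hc : ∀ t, G (θ t, t) = c)
    (hFOC : ∀ t u, fderiv ℝ F (θ t, t) (u, 0) = χ t * fderiv ℝ G (θ t, t) (u, 0)) (q : ℝ) :
    deriv (deriv fun t => F (θ t, t)) q =
      fderiv ℝ (fderiv ℝ F) (θ q, q) (0, 1) (0, 1)
        - 2 * deriv χ q * fderiv ℝ G (θ q, q) (0, 1)
        - χ q * fderiv ℝ (fderiv ℝ G) (θ q, q) (0, 1) (0, 1)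
        + (χ q * fderiv ℝ (fderiv ℝ G) (θ q, q) (deriv θ q, 0) (deriv θ q, 0)
          - fderiv ℝ (fderiv ℝ F) (θ q, q) (deriv θ q, 0) (deriv θ q, 0)) := by
  have hF' := hF.differentiable_fderiv le_rfl
  have hG' := hG.differentiable_fderiv le_rfl
  have hsplit : ((deriv θ q, 1) : E × ℝ) = (deriv θ q, 0) + (0, 1) := by simp
  have hcon := fderiv_apply_tangent_eq_zero_of_comp_graph_const
    (hG.differentiable two_ne_zero _) (hθ q) hc
  have hFOC' := fderiv_fderiv_tangent_apply_inl_of_lagrange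
    (hF' _) (hG' _) (hθ q) (hχ q) hFOC (deriv θ q)
  have hsymF := (hF.contDiffAt (x := (θ q, q))).isSymmSndFDerivAt (by simp)
    (deriv θ q, 0) (0, 1)
  have hsymG := (hG.contDiffAt (x := (θ q, q))).isSymmSndFDerivAt (by simp)
    (deriv θ q, 0) (0, 1)
  rw [deriv_deriv_comp_graph_of_lagrange (hF.differentiable two_ne_zero)
    (hG.differentiable two_ne_zero) (hF' _) (hG' _) hθ (hχ q) hc hFOC]
  rw [hsplit] at hcon hFOC' ⊢
  simp only [map_add, add_apply] at hcon hFOC' ⊢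
  linear_combination hFOC' + hsymF - χ q * hsymG + deriv χ q * hcon

end Envelope

theorem second_order_envelope_theorem_general
    {d : ℕ} (f g : (Fin d → ℝ) → ℝ → ℝ) (c : ℝ)
    (hf : ContDiff ℝ 2 (fun p : (Fin d → ℝ) × ℝ => f p.1 p.2))
    (hg : ContDiff ℝ 2 (fun p : (Fin d → ℝ) × ℝ => g p.1 p.2))
    (θs : ℝ → (Fin d → ℝ)) (hθs : ContDiff ℝ 1 θs)
    (χ : ℝ → ℝ) (hχ : ContDiff ℝ 1 χ)
    (hconstraint : ∀ q, g (θs q) q = c)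
    (hFOC : ∀ q, fderiv ℝ (fun θ => f θ q) (θs q) = χ q • fderiv ℝ (fun θ => g θ q) (θs q)) :
    ∀ q : ℝ,
      deriv (deriv (fun t => f (θs t) t)) q =
        deriv (deriv (fun t => f (θs q) t)) q
        - 2 * deriv χ q * deriv (fun t => g (θs q) t) q
        - χ q * deriv (deriv (fun t => g (θs q) t)) q
        + (fderiv ℝ (fun θ => χ q • fderiv ℝ (fun θ' => g θ' q) θ
              - fderiv ℝ (fun θ' => f θ' q) θ) (θs q) (deriv θs q)) (deriv θs q) := by
  intro q
  have hfd := hf.differentiable two_ne_zero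
  have hgd := hg.differentiable two_ne_zero
  have hfd' := hf.differentiable_fderiv le_rfl
  have hgd' := hg.differentiable_fderiv le_rfl
  have hFOC' : ∀ t u, fderiv ℝ (fun p : (Fin d → ℝ) × ℝ => f p.1 p.2) (θs t, t) (u, 0) =
      χ t * fderiv ℝ (fun p : (Fin d → ℝ) × ℝ => g p.1 p.2) (θs t, t) (u, 0) := fun t u => by
    simpa [fderiv_comp_prodMk_left (hfd _), fderiv_comp_prodMk_left (hgd _)] using
      congrArg (· u) (hFOC t)
  rw [deriv_deriv_comp_prodMk_right hfd (hfd' _), deriv_deriv_comp_prodMk_right hgd (hgd' _),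
    (hasDerivAt_comp_prodMk_right (hgd _)).deriv,
    (((hasFDerivAt_fderiv_comp_prodMk_left hgd (hgd' _)).fun_const_smul (χ q)).fun_sub
      (hasFDerivAt_fderiv_comp_prodMk_left hfd (hfd' _))).fderiv]
  simpa using deriv_deriv_envelope hf hg (hθs.differentiable one_ne_zero)
    (hχ.differentiable one_ne_zero) hconstraint hFOC' q

/-- Second-order envelope formula: under `C²` data, a `C¹` curve of constrained maximizers
`θ*(q)` with `g(θ*(q),q) = c` and `C¹` Lagrange multiplier `χ(q)`, the value function
`v(q) = f(θ*(q),q)` satisfies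
`v''(q) = ∂²f/∂q² − 2χ'(q)∂g/∂q − χ(q)∂²g/∂q²
          + (χ(q) D²_θθ g − D²_θθ f)(dθ*/dq, dθ*/dq)`,
all partial derivatives being evaluated at `(θ*(q), q)`. -/
theorem second_order_envelope_theorem
    {d : ℕ} (f g : (Fin d → ℝ) → ℝ → ℝ) (c : ℝ)
    (hf : ContDiff ℝ 2 (fun p : (Fin d → ℝ) × ℝ => f p.1 p.2))
    (hg : ContDiff ℝ 2 (fun p : (Fin d → ℝ) × ℝ => g p.1 p.2))
    (θs : ℝ → (Fin d → ℝ)) (hθs : ContDiff ℝ 1 θs)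
    (χ : ℝ → ℝ) (hχ : ContDiff ℝ 1 χ)
    (hmax : ∀ q, ∀ θ : Fin d → ℝ, g θ q = c → f θ q ≤ f (θs q) q)
    (hconstraint : ∀ q, g (θs q) q = c)
    (hFOC : ∀ q, fderiv ℝ (fun θ => f θ q) (θs q) = χ q • fderiv ℝ (fun θ => g θ q) (θs q)) :
    ∀ q : ℝ,
      deriv (deriv (fun t => f (θs t) t)) q =
        deriv (deriv (fun t => f (θs q) t)) q
        - 2 * deriv χ q * deriv (fun t => g (θs q) t) q
        - χ q * deriv (deriv (fun t => g (θs q) t)) q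
        + (fderiv ℝ (fun θ => χ q • fderiv ℝ (fun θ' => g θ' q) θ
              - fderiv ℝ (fun θ' => f θ' q) θ) (θs q) (deriv θs q)) (deriv θs q) :=
  second_order_envelope_theorem_general f g c hf hg θs hθs χ hχ hconstraint hFOC
end
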